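/- For 0 < q < 1, the autonomous Caputo fractional initial value problem D_*^q x(t) = f(x(t)), x(0) = x_0, with f : ℝⁿ → ℝⁿ continuous, cannot have a non-constant T-periodic solution for any T > 0. -/

import Mathlib

/-!
Fix a coordinate `g` of a `T`-periodic solution; then `g` and its Caputo derivative are
`T`-periodic. Splitting the Caputo integral at `t + T` at the point `T`, periodicity of `g'` turns
the tail into the Caputo integral at `t`, leaving `∫₀ᵀ (u - s)^(-q) g'(s) ds = 0` for all `u ≥ T`.
Expanding `(u - s)^(-q) = u^(-q) ∑ₖ multichoose q k (s/u)^k` for large `u`, all coefficients being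
positive since `q > 0`, kills every moment `∫₀ᵀ s^k g'(s) ds` in turn. By Weierstrass approximation
`g' = 0` on `[0, T]`, so `g` is constant.
-/

open MeasureTheory Real Filter

/-- Caputo fractional derivative of order `q` with starting point `0`. -/
noncomputable def caputo (q : ℝ) (f : ℝ → ℝ) (t : ℝ) : ℝ :=
  (1 / Real.Gamma (1 - q)) * ∫ τ in (0:ℝ)..t, (t - τ) ^ (-q) * deriv f τ

/-- Two-parameter Mittag-Leffler function (real arguments). -/
noncomputable def ML (a b z : ℝ) : ℝ :=
  ∑' k : ℕ, z ^ k / Real.Gamma (a * k + b)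

open Set Asymptotics Topology

lemma Filter.Eventually.forall_mul_of_isCompact {P : ℝ → Prop} (hP : ∀ᶠ y in 𝓝 0, P y)
    {K : Set ℝ} (hK : IsCompact K) : ∀ᶠ w in 𝓝 (0 : ℝ), ∀ s ∈ K, P (w * s) :=
  hK.eventually_forall_of_forall_eventually fun s _ ↦
    (continuous_mul.tendsto' ((0 : ℝ), s) 0 (zero_mul s)).eventually hP

lemma eq_zero_of_const_mul_pow_isBigO {c : ℝ} {k : ℕ}
    (h : (fun w : ℝ ↦ c * w ^ k) =O[𝓝[>] 0] fun w ↦ w ^ (k + 1)) : c = 0 := by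
  by_contra hc
  have hlittle : (fun w : ℝ ↦ w ^ k) =o[𝓝[>] 0] fun w ↦ w ^ k :=
    (isLittleO_const_mul_left_iff hc).1 <|
      h.trans_isLittleO ((isLittleO_pow_pow k.lt_succ_self).mono nhdsWithin_le_nhds)
  have hne : ∀ᶠ w in 𝓝[>] (0 : ℝ), w ^ k ≠ 0 :=
    eventually_nhdsWithin_of_forall fun w hw ↦ (pow_pos (mem_Ioi.1 hw) k).ne'
  exact isLittleO_irrefl hne.frequently hlittle

lemma FormalMultilinearSeries.partialSum_eq_sum_coeff_mul_pow
    (p : FormalMultilinearSeries ℝ ℝ ℝ) (n : ℕ) (y : ℝ) :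
    p.partialSum n y = ∑ j ∈ Finset.range n, p.coeff j * y ^ j := by
  simp [FormalMultilinearSeries.partialSum, mul_comm]

section PowerSeriesMoments

variable {φ : ℝ → ℝ} {p : FormalMultilinearSeries ℝ ℝ ℝ} {h : ℝ → ℝ} {a b : ℝ}

theorem HasFPowerSeriesAt.isBigO_integral_comp_mul_sub_sum (hφ : HasFPowerSeriesAt φ p 0)
    (hh : IntervalIntegrable h volume a b) (n : ℕ) :
    (fun w ↦ (∫ s in a..b, φ (w * s) * h s) -
        ∑ j ∈ Finset.range n, p.coeff j * w ^ j * ∫ s in a..b, s ^ j * h s) =O[𝓝 0]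
      fun w ↦ w ^ n := by
  obtain ⟨C, hC0, hC⟩ := (hφ.isBigO_sub_partialSum_pow n).exists_pos
  have hloc : ∀ᶠ y in 𝓝 0, ContinuousAt φ y ∧ |φ y - p.partialSum n y| ≤ C * |y| ^ n :=
    (hφ.analyticAt.eventually_analyticAt.mono fun y hy ↦ hy.continuousAt).and
      (hC.bound.mono fun y hy ↦ by simpa using hy)
  have hbound : IntervalIntegrable (fun s ↦ |s| ^ n * |h s|) volume a b :=
    hh.abs.continuousOn_mul (continuous_abs.pow n).continuousOn
  refine IsBigO.of_bound (C * |(∫ s in a..b, |s| ^ n * |h s|)|) <|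
    (hloc.forall_mul_of_isCompact (isCompact_uIcc (a := a) (b := b))).mono fun w hw ↦ ?_
  have hφw : IntervalIntegrable (fun s ↦ φ (w * s) * h s) volume a b :=
    hh.continuousOn_mul fun s hs ↦
      ((hw s hs).1.comp (continuous_const_mul w).continuousAt).continuousWithinAt
  have hps : IntervalIntegrable (fun s ↦ p.partialSum n (w * s) * h s) volume a b :=
    hh.continuousOn_mul ((p.partialSum_continuous n).comp (continuous_const_mul w)).continuousOn
  have hsum : ∫ s in a..b, p.partialSum n (w * s) * h s =
      ∑ j ∈ Finset.range n, p.coeff j * w ^ j * ∫ s in a..b, s ^ j * h s := by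
    simp_rw [FormalMultilinearSeries.partialSum_eq_sum_coeff_mul_pow, Finset.sum_mul]
    rw [intervalIntegral.integral_finsetSum fun j _ ↦ hh.continuousOn_mul (by fun_prop)]
    refine Finset.sum_congr rfl fun j _ ↦ ?_
    rw [← intervalIntegral.integral_const_mul]
    congr 1 with s
    ring
  rw [← hsum, ← intervalIntegral.integral_sub hφw hps]
  simp_rw [← sub_mul]
  calc ‖∫ s in a..b, (φ (w * s) - p.partialSum n (w * s)) * h s‖
      ≤ |∫ s in a..b, C * |w| ^ n * (|s| ^ n * |h s|)| := by
        refine intervalIntegral.norm_integral_le_abs_of_norm_le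
          (ae_restrict_of_forall_mem measurableSet_uIoc fun s hs ↦ ?_) (hbound.const_mul _)
        rw [norm_mul, Real.norm_eq_abs, Real.norm_eq_abs]
        calc |φ (w * s) - p.partialSum n (w * s)| * |h s| ≤ C * |w * s| ^ n * |h s| := by
              gcongr
              exact (hw s (uIoc_subset_uIcc hs)).2
          _ = C * |w| ^ n * (|s| ^ n * |h s|) := by rw [abs_mul, mul_pow]; ring
    _ = C * |(∫ s in a..b, |s| ^ n * |h s|)| * ‖w ^ n‖ := by
        rw [intervalIntegral.integral_const_mul, abs_mul, abs_of_nonneg (by positivity),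
          norm_pow, Real.norm_eq_abs]
        ring

theorem HasFPowerSeriesAt.coeff_mul_integral_pow_mul_eq_zero (hφ : HasFPowerSeriesAt φ p 0)
    (hh : IntervalIntegrable h volume a b)
    (hzero : ∀ᶠ w in 𝓝[>] 0, ∫ s in a..b, φ (w * s) * h s = 0) (k : ℕ) :
    p.coeff k * ∫ s in a..b, s ^ k * h s = 0 := by
  induction k using Nat.strong_induction_on with
  | _ k ih =>
  -- with the lower terms gone, the expansion to order `k + 1` reads `c_k M_k w^k = O(w^(k+1))`
  refine eq_zero_of_const_mul_pow_isBigO <|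
    ((hφ.isBigO_integral_comp_mul_sub_sum hh (k + 1)).mono nhdsWithin_le_nhds).neg_left.congr'
      (hzero.mono fun w hw ↦ ?_) EventuallyEq.rfl
  have hlow : ∀ j ∈ Finset.range k, p.coeff j * w ^ j * ∫ s in a..b, s ^ j * h s = 0 :=
    fun j hj ↦ by rw [mul_right_comm, ih j (Finset.mem_range.1 hj), zero_mul]
  simp only [hw, Finset.sum_range_succ, Finset.sum_eq_zero hlow]
  ring

end PowerSeriesMoments

lemma Ring.multichoose_pos {q : ℝ} (hq : 0 < q) (k : ℕ) : 0 < Ring.multichoose q k := by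
  have h := Ring.factorial_nsmul_multichoose_eq_ascPochhammer q k
  rw [Polynomial.ascPochhammer_smeval_eq_eval, nsmul_eq_mul] at h
  exact (mul_pos_iff_of_pos_left (Nat.cast_pos.2 k.factorial_pos)).1
    (h ▸ ascPochhammer_pos k q hq)

lemma inv_sub_rpow_neg {q w s : ℝ} (hw : 0 < w) (hws : w * s < 1) :
    (w⁻¹ - s) ^ (-q) = w ^ q * (1 / (1 - w * s) ^ q) := by
  have hsplit : w⁻¹ - s = w⁻¹ * (1 - w * s) := by field_simp
  rw [hsplit, rpow_neg (mul_nonneg (inv_nonneg.2 hw.le) (by linarith)),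
    mul_rpow (inv_nonneg.2 hw.le) (by linarith), inv_rpow hw.le, mul_inv, inv_inv, one_div]

theorem integral_pow_mul_eq_zero_of_integral_sub_rpow_neg_mul_eq_zero {q : ℝ} (hq : 0 < q)
    {h : ℝ → ℝ} {a b : ℝ} (hh : IntervalIntegrable h volume a b)
    (hker : ∀ᶠ u in atTop, ∫ s in a..b, (u - s) ^ (-q) * h s = 0) (k : ℕ) :
    ∫ s in a..b, s ^ k * h s = 0 := by
  have hφ := (one_div_one_sub_rpow_hasFPowerSeriesOnBall_zero q).hasFPowerSeriesAt
  have hsmall : ∀ᶠ w in 𝓝[>] (0 : ℝ), ∀ s ∈ uIcc a b, w * s < 1 :=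
    nhdsWithin_le_nhds <| (eventually_lt_nhds one_pos).forall_mul_of_isCompact isCompact_uIcc
  have hzero : ∀ᶠ w in 𝓝[>] (0 : ℝ), ∫ s in a..b, 1 / (1 - w * s) ^ q * h s = 0 := by
    filter_upwards [tendsto_inv_nhdsGT_zero.eventually hker, self_mem_nhdsWithin, hsmall]
      with w hw (hw0 : 0 < w) hws
    rw [intervalIntegral.integral_congr fun s hs ↦ by
      rw [inv_sub_rpow_neg hw0 (hws s hs), mul_assoc], intervalIntegral.integral_const_mul] at hw
    exact (mul_eq_zero.1 hw).resolve_left (rpow_pos_of_pos hw0 q).ne'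
  have hcoeff := hφ.coeff_mul_integral_pow_mul_eq_zero hh hzero k
  rw [FormalMultilinearSeries.coeff_ofScalars, ← Ring.multichoose_eq] at hcoeff
  exact (mul_eq_zero.1 hcoeff).resolve_left (Ring.multichoose_pos hq k).ne'

theorem integral_mul_eq_zero_of_forall_integral_pow_mul_eq_zero {a b : ℝ} (hab : a ≤ b)
    {h : ℝ → ℝ} (hh : IntervalIntegrable h volume a b)
    (hmom : ∀ k : ℕ, ∫ s in a..b, s ^ k * h s = 0) {φ : ℝ → ℝ} (hφ : ContinuousOn φ (Icc a b)) :
    ∫ s in a..b, φ s * h s = 0 := by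
  have hpoly : ∀ P : Polynomial ℝ, ∫ s in a..b, P.eval s * h s = 0 := fun P ↦ by
    simp_rw [Polynomial.eval_eq_sum_range, Finset.sum_mul, mul_assoc]
    rw [intervalIntegral.integral_finsetSum fun j _ ↦
      (hh.continuousOn_mul (continuous_pow j).continuousOn).const_mul _]
    exact Finset.sum_eq_zero fun j _ ↦ by rw [intervalIntegral.integral_const_mul, hmom, mul_zero]
  have happrox : ∀ ε > 0, |∫ s in a..b, φ s * h s| ≤ ε * ∫ s in a..b, |h s| := fun ε hε ↦ by
    obtain ⟨P, hP⟩ := exists_polynomial_near_of_continuousOn a b φ hφ ε hε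
    have hPφ : ∫ s in a..b, φ s * h s = ∫ s in a..b, (φ s - P.eval s) * h s := by
      simp_rw [sub_mul]
      rw [intervalIntegral.integral_sub (hh.continuousOn_mul (by rwa [uIcc_of_le hab]))
        (hh.continuousOn_mul P.continuous.continuousOn), hpoly, sub_zero]
    rw [hPφ, ← Real.norm_eq_abs, ← intervalIntegral.integral_const_mul]
    refine intervalIntegral.norm_integral_le_of_norm_le hab (ae_of_all _ fun s hs ↦ ?_)
      (hh.abs.const_mul ε)
    rw [norm_mul, Real.norm_eq_abs, Real.norm_eq_abs, abs_sub_comm]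
    gcongr
    exact (hP s (Ioc_subset_Icc_self hs)).le
  have hlim : Tendsto (fun ε ↦ ε * ∫ s in a..b, |h s|) (𝓝[>] 0) (𝓝 0) :=
    ((continuous_mul_const _).tendsto' 0 0 (zero_mul _)).mono_left nhdsWithin_le_nhds
  exact abs_nonpos_iff.1 <| ge_of_tendsto hlim <| eventually_nhdsWithin_of_forall happrox

theorem eqOn_zero_of_forall_integral_pow_mul_eq_zero {a b : ℝ} (hab : a < b) {h : ℝ → ℝ}
    (hh : ContinuousOn h (Icc a b)) (hmom : ∀ k : ℕ, ∫ s in a..b, s ^ k * h s = 0) :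
    EqOn h 0 (Icc a b) := by
  intro c hc
  by_contra hne
  have hsq := integral_mul_eq_zero_of_forall_integral_pow_mul_eq_zero hab.le
    (hh.intervalIntegrable_of_Icc hab.le) hmom hh
  exact (intervalIntegral.integral_pos hab (hh.mul hh) (fun x _ ↦ mul_self_nonneg _)
    ⟨c, hc, mul_self_pos.2 hne⟩).ne' hsq

lemma intervalIntegrable_sub_rpow_neg_mul {q : ℝ} (hq : q < 1) {g : ℝ → ℝ} {a b : ℝ}
    (hg : ContinuousOn g (uIcc a b)) (c : ℝ) :
    IntervalIntegrable (fun τ ↦ (c - τ) ^ (-q) * g τ) volume a b := by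
  have hpow : IntervalIntegrable (fun x : ℝ ↦ x ^ (-q)) volume (c - a) (c - b) :=
    intervalIntegral.intervalIntegrable_rpow' (by linarith)
  have hshift := hpow.comp_sub_left c
  rw [sub_sub_cancel, sub_sub_cancel] at hshift
  exact hshift.mul_continuousOn hg

lemma deriv_add_period_eq {g : ℝ → ℝ} {T : ℝ} (hper : ∀ t, 0 ≤ t → g (t + T) = g t) {s : ℝ}
    (hs : 0 < s) : deriv g (s + T) = deriv g s := by
  rw [← deriv_comp_add_const]
  exact Filter.EventuallyEq.deriv_eq <|
    eventually_of_mem (Ioi_mem_nhds hs) fun u (hu : 0 < u) ↦ hper u hu.le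

lemma exists_mem_Icc_apply_eq_of_add_period_eq {α : Type*} {g : ℝ → α} {T : ℝ} (hT : 0 < T)
    (hper : ∀ t, 0 ≤ t → g (t + T) = g t) {t : ℝ} (ht : 0 ≤ t) : ∃ s ∈ Icc 0 T, g t = g s := by
  obtain ⟨n, hn⟩ := exists_nat_ge (t / T)
  rw [div_le_iff₀ hT] at hn
  induction n generalizing t with
  | zero => exact ⟨t, ⟨ht, by simp at hn; linarith⟩, rfl⟩
  | succ n ih =>
    rcases le_or_gt t T with htT | hTt
    · exact ⟨t, ⟨ht, htT⟩, rfl⟩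
    · obtain ⟨s, hs, hgs⟩ := ih (t := t - T) (by linarith) (by push_cast at hn; linarith)
      exact ⟨s, hs, by rw [← hgs, ← hper (t - T) (by linarith), sub_add_cancel]⟩

theorem integral_sub_rpow_neg_mul_deriv_eq_zero_of_caputo_periodic {q T : ℝ} (hq : q < 1)
    {g : ℝ → ℝ} (hg' : Continuous (deriv g)) (hper : ∀ t, 0 ≤ t → g (t + T) = g t)
    (hcap : ∀ t, 0 ≤ t → caputo q g (t + T) = caputo q g t) {u : ℝ} (hu : T ≤ u) :
    ∫ s in 0..T, (u - s) ^ (-q) * deriv g s = 0 := by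
  obtain ⟨t, ht, rfl⟩ : ∃ t, 0 ≤ t ∧ u = t + T := ⟨u - T, by linarith, by ring⟩
  have hΓ : 1 / Gamma (1 - q) ≠ 0 := one_div_ne_zero (Gamma_pos_of_pos (by linarith)).ne'
  have hcap' : ∫ τ in 0..t + T, (t + T - τ) ^ (-q) * deriv g τ =
      ∫ τ in 0..t, (t - τ) ^ (-q) * deriv g τ := mul_left_cancel₀ hΓ (hcap t ht)
  have htail : ∫ τ in T..t + T, (t + T - τ) ^ (-q) * deriv g τ =
      ∫ τ in 0..t, (t - τ) ^ (-q) * deriv g τ := by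
    have hshift := intervalIntegral.integral_comp_add_right (a := 0) (b := t)
      (fun τ ↦ (t + T - τ) ^ (-q) * deriv g τ) T
    rw [zero_add] at hshift
    rw [← hshift]
    refine intervalIntegral.integral_congr_ae (ae_of_all _ fun s hs ↦ ?_)
    rw [uIoc_of_le ht] at hs
    rw [add_sub_add_right_eq_sub, deriv_add_period_eq hper hs.1]
  rw [← intervalIntegral.integral_add_adjacent_intervals
    (intervalIntegrable_sub_rpow_neg_mul hq hg'.continuousOn _)
    (intervalIntegrable_sub_rpow_neg_mul hq hg'.continuousOn _), htail] at hcap'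
  linarith

theorem eq_apply_zero_of_caputo_periodic {q T : ℝ} (hq0 : 0 < q) (hq1 : q < 1) (hT : 0 < T)
    {g : ℝ → ℝ} (hg : ContDiff ℝ 1 g) (hper : ∀ t, 0 ≤ t → g (t + T) = g t)
    (hcap : ∀ t, 0 ≤ t → caputo q g (t + T) = caputo q g t) {t : ℝ} (ht : 0 ≤ t) :
    g t = g 0 := by
  have hg' : Continuous (deriv g) := hg.continuous_deriv le_rfl
  have hmom := integral_pow_mul_eq_zero_of_integral_sub_rpow_neg_mul_eq_zero hq0
    (hg'.intervalIntegrable 0 T) <| (eventually_ge_atTop T).mono fun _ hu ↦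
      integral_sub_rpow_neg_mul_deriv_eq_zero_of_caputo_periodic hq1 hg' hper hcap hu
  have hderiv : EqOn (deriv g) 0 (Icc 0 T) :=
    eqOn_zero_of_forall_integral_pow_mul_eq_zero hT hg'.continuousOn hmom
  have hconst : ∀ s ∈ Icc 0 T, g s = g 0 :=
    constant_of_has_deriv_right_zero hg.continuous.continuousOn fun s hs ↦ by
      simpa [hderiv (Ico_subset_Icc_self hs)] using
        (hg.differentiable one_ne_zero s).hasDerivAt.hasDerivWithinAt
  obtain ⟨s, hs, hts⟩ := exists_mem_Icc_apply_eq_of_add_period_eq hT hper ht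
  exact hts.trans (hconst s hs)

theorem caputo_ivp_no_periodic_solution_general
    (n : ℕ) (q : ℝ) (hq0 : 0 < q) (hq1 : q < 1)
    (f : (Fin n → ℝ) → (Fin n → ℝ))
    (x : ℝ → Fin n → ℝ) (hx : ContDiff ℝ 1 x)
    (hivp : ∀ t : ℝ, 0 ≤ t → ∀ i, caputo q (fun s => x s i) t = f (x t) i)
    (T : ℝ) (hT : 0 < T) :
    ¬ ((∀ t : ℝ, 0 ≤ t → x (t + T) = x t) ∧ ∃ s t : ℝ, 0 ≤ s ∧ 0 ≤ t ∧ x s ≠ x t) := by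
  rintro ⟨hper, s, t, hs, ht, hne⟩
  obtain ⟨i, hi⟩ := Function.ne_iff.1 hne
  have hconst : ∀ r, 0 ≤ r → x r i = x 0 i := fun r hr ↦
    eq_apply_zero_of_caputo_periodic hq0 hq1 hT (contDiff_pi.1 hx i)
      (fun r hr ↦ congrFun (hper r hr) i) (fun r hr ↦ by rw [hivp _ (by linarith) i, hivp r hr i, hper r hr]) hr
  exact hi ((hconst s hs).trans (hconst t ht).symm)

theorem caputo_ivp_no_periodic_solution
    (n : ℕ) (q : ℝ) (hq0 : 0 < q) (hq1 : q < 1)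
    (f : (Fin n → ℝ) → (Fin n → ℝ)) (hf : Continuous f)
    (x0 : Fin n → ℝ) (x : ℝ → Fin n → ℝ) (hx : ContDiff ℝ 1 x)
    (hivp : ∀ t : ℝ, 0 ≤ t → ∀ i, caputo q (fun s => x s i) t = f (x t) i)
    (hinit : x 0 = x0) (T : ℝ) (hT : 0 < T) :
    ¬ ((∀ t : ℝ, 0 ≤ t → x (t + T) = x t) ∧ ∃ s t : ℝ, 0 ≤ s ∧ 0 ≤ t ∧ x s ≠ x t) :=
  caputo_ivp_no_periodic_solution_general n q hq0 hq1 f x hx hivp T hT
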